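/- arXiv:2509.13176 — 5 statements merged into one kernel-verified Lean document; each statement's English description precedes it below -/
import Mathlib

section
/- (Lemma 1, unbiasedness of the influence function) Under the stated setup and the conditional-moment restriction, the influence function has mean zero at the true parameter: E[g(β₀)] = E[ (W − E[W | 𝒢]) · (R_A·R_T − β₀·R_A² − E[R_A·R_T − β₀·R_A² | 𝒢]) ] = 0. -/
/-!
Write `U = R_A R_T - β₀ R_A²`. Since `R_T - β₀ R_A = (T - β₀ A) - V` with
`V = E[T | ℋ] - β₀ E[A | ℋ]` ℋ-measurable and `E[R_A | ℋ] = 0`, we get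
`E[U | ℋ] = E[R_A (T - β₀ A) | ℋ]`, which the conditional-moment restriction makes
𝒢-measurable; by the tower property `E[U | 𝒢] = E[U | ℋ]`. Hence
`g(β₀) = R_W (U - E[U | ℋ])` with `R_W` bounded and ℋ-measurable, and pulling `R_W` out of
`E[· | ℋ]` shows that this has mean zero.
-/

open MeasureTheory

namespace MeasureTheory

variable {Ω : Type*} {m m₀ : MeasurableSpace Ω} {μ : Measure Ω} {f g : Ω → ℝ}

theorem condExp_mul_sub_condExp (hm : m ≤ m₀) [SigmaFinite (μ.trim hm)]
    (hg : StronglyMeasurable[m] g) (hf : Integrable f μ)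
    (hgf : Integrable (g * (f - μ[f|m])) μ) :
    μ[g * (f - μ[f|m]) | m] =ᵐ[μ] 0 := by
  have hidem : μ[μ[f|m] | m] = μ[f|m] :=
    condExp_of_stronglyMeasurable hm stronglyMeasurable_condExp integrable_condExp
  have hres : μ[f - μ[f|m] | m] =ᵐ[μ] 0 := by
    filter_upwards [condExp_sub hf (integrable_condExp (m := m) (f := f)) m] with ω hω
    simp [hω, hidem]
  filter_upwards [condExp_mul_of_stronglyMeasurable_left hg hgf (hf.sub integrable_condExp),
    hres] with ω hω hω'
  simp [hω, hω']

theorem integral_mul_sub_condExp (hm : m ≤ m₀) [SigmaFinite (μ.trim hm)] {C : ℝ}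
    (hg : StronglyMeasurable[m] g) (hg_bdd : ∀ᵐ ω ∂μ, ‖g ω‖ ≤ C) (hf : Integrable f μ) :
    ∫ ω, g ω * (f ω - μ[f|m] ω) ∂μ = 0 := by
  have hgf : Integrable (g * (f - μ[f|m])) μ :=
    (hf.sub integrable_condExp).bdd_mul (hg.mono hm).aestronglyMeasurable hg_bdd
  calc ∫ ω, g ω * (f ω - μ[f|m] ω) ∂μ = ∫ ω, μ[g * (f - μ[f|m]) | m] ω ∂μ :=
        (integral_condExp hm).symm
    _ = 0 := by simp [integral_congr_ae (condExp_mul_sub_condExp hm hg hf hgf)]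

theorem ae_norm_sub_condExp_le {C : ℝ} (hf : ∀ᵐ ω ∂μ, |f ω| ≤ C) :
    ∀ᵐ ω ∂μ, ‖f ω - μ[f|m] ω‖ ≤ 2 * C := by
  filter_upwards [hf, ae_bdd_abs_condExp_of_ae_bdd_abs (m := m) hf] with ω hω hω'
  rw [Real.norm_eq_abs, two_mul]
  exact (abs_sub _ _).trans (add_le_add hω hω')

theorem condExp_ae_eq_of_condExp_ae_eq_of_le {m₁ m₂ : MeasurableSpace Ω} {k : Ω → ℝ}
    [IsFiniteMeasure μ] (h₁₂ : m₁ ≤ m₂) (h₂ : m₂ ≤ m₀) (hk : StronglyMeasurable[m₁] k)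
    (hki : Integrable k μ) (hfk : μ[f|m₂] =ᵐ[μ] k) :
    μ[f|m₁] =ᵐ[μ] k := by
  calc μ[f|m₁] =ᵐ[μ] μ[μ[f|m₂] | m₁] := (condExp_condExp_of_le h₁₂ h₂).symm
    _ =ᵐ[μ] μ[k|m₁] := condExp_congr_ae hfk
    _ = k := condExp_of_stronglyMeasurable (h₁₂.trans h₂) hk hki

theorem integrable_residual_mul_residual_sub_sq {A T : Ω → ℝ} (hA : MemLp A 2 μ)
    (hT : MemLp T 2 μ) (β : ℝ) :
    Integrable (fun ω => (A ω - μ[A|m] ω) * (T ω - μ[T|m] ω) - β * (A ω - μ[A|m] ω) ^ 2) μ := by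
  have hRA : MemLp (A - μ[A|m]) 2 μ := hA.sub (hA.condExp one_le_two)
  have hRT : MemLp (T - μ[T|m]) 2 μ := hT.sub (hT.condExp one_le_two)
  refine ((hRA.integrable_mul hRT).sub ((hRA.integrable_mul hRA).const_mul β)).congr
    (.of_forall fun ω => ?_)
  simp [sq]

theorem condExp_residual_mul_residual_sub_sq (hm : m ≤ m₀) [IsFiniteMeasure μ] {A T : Ω → ℝ}
    (hA : MemLp A 2 μ) (hT : MemLp T 2 μ) (β : ℝ) :
    μ[fun ω => (A ω - μ[A|m] ω) * (T ω - μ[T|m] ω) - β * (A ω - μ[A|m] ω) ^ 2 | m]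
      =ᵐ[μ] μ[fun ω => (A ω - μ[A|m] ω) * (T ω - β * A ω) | m] := by
  have hR : MemLp (A - μ[A|m]) 2 μ := hA.sub (hA.condExp one_le_two)
  set V : Ω → ℝ := fun ω => μ[T|m] ω - β * μ[A|m] ω
  have hV : MemLp V 2 μ := (hT.condExp one_le_two).sub ((hA.condExp one_le_two).const_mul β)
  have hVR : Integrable (V * (A - μ[A|m])) μ := hV.integrable_mul hR
  have hsplit : (fun ω => (A ω - μ[A|m] ω) * (T ω - μ[T|m] ω) - β * (A ω - μ[A|m] ω) ^ 2)
      = (fun ω => (A ω - μ[A|m] ω) * (T ω - β * A ω)) - V * (A - μ[A|m]) := by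
    funext ω
    simp only [V, Pi.sub_apply, Pi.mul_apply]
    ring
  have hRS : Integrable (fun ω => (A ω - μ[A|m] ω) * (T ω - β * A ω)) μ :=
    hR.integrable_mul (hT.sub (hA.const_mul β))
  rw [hsplit]
  filter_upwards [condExp_sub hRS hVR m,
    condExp_mul_sub_condExp hm (by fun_prop) (hA.integrable one_le_two) hVR] with ω hω hω'
  rw [hω, Pi.sub_apply, hω', Pi.zero_apply, sub_zero]

end MeasureTheory

/-- **Lemma 1 (unbiasedness of the influence function).** Under the setup and the
conditional-moment restriction `E[R_A (T − β₀ A) | ℋ] = E[R_A (T − β₀ A) | 𝒢]` a.s.,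
the influence function has mean zero at the true parameter: `E[g(β₀)] = 0`. -/
theorem influence_function_unbiased
    {Ω : Type*} {m0 : MeasurableSpace Ω} (P : Measure Ω) [IsProbabilityMeasure P]
    (𝒢 ℋ : MeasurableSpace Ω) (h𝒢ℋ : 𝒢 ≤ ℋ) (hℋm0 : ℋ ≤ m0)
    (A T W : Ω → ℝ) (hA4 : MemLp A 4 P) (hT4 : MemLp T 4 P)
    (CW : ℝ) (hWbd : ∀ ω, |W ω| ≤ CW) (hWmeas : Measurable[ℋ] W)
    (RW RA RT : Ω → ℝ)
    (hRW : RW = fun ω => W ω - (P[W|𝒢]) ω)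
    (hRA : RA = fun ω => A ω - (P[A|ℋ]) ω)
    (hRT : RT = fun ω => T ω - (P[T|ℋ]) ω)
    (g : ℝ → Ω → ℝ)
    (hg : ∀ β, g β = fun ω =>
      RW ω * (RA ω * RT ω - β * RA ω ^ 2
        - (P[fun ω' => RA ω' * RT ω' - β * RA ω' ^ 2|𝒢]) ω))
    (β₀ : ℝ)
    (hCMR : P[fun ω => RA ω * (T ω - β₀ * A ω)|ℋ]
      =ᵐ[P] P[fun ω => RA ω * (T ω - β₀ * A ω)|𝒢]) :
    ∫ ω, g β₀ ω ∂P = 0 := by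
  subst hRW hRA hRT
  beta_reduce at hg hCMR
  set U : Ω → ℝ := fun ω => (A ω - P[A|ℋ] ω) * (T ω - P[T|ℋ] ω) - β₀ * (A ω - P[A|ℋ] ω) ^ 2
  have hA2 : MemLp A 2 P := hA4.mono_exponent (by norm_num)
  have hT2 : MemLp T 2 P := hT4.mono_exponent (by norm_num)
  have hUℋ : P[U|ℋ] =ᵐ[P] P[fun ω => (A ω - P[A|ℋ] ω) * (T ω - β₀ * A ω) | 𝒢] :=
    (condExp_residual_mul_residual_sub_sq hℋm0 hA2 hT2 β₀).trans hCMR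
  have hU𝒢 := condExp_ae_eq_of_condExp_ae_eq_of_le h𝒢ℋ hℋm0 stronglyMeasurable_condExp
    integrable_condExp hUℋ
  have hg₀ : g β₀ =ᵐ[P] fun ω => (W ω - P[W|𝒢] ω) * (U ω - P[U|ℋ] ω) := by
    rw [hg]
    filter_upwards [hU𝒢, hUℋ] with ω h𝒢 hℋ
    rw [h𝒢, hℋ]
  rw [integral_congr_ae hg₀]
  exact integral_mul_sub_condExp hℋm0
    (hWmeas.stronglyMeasurable.sub (stronglyMeasurable_condExp.mono h𝒢ℋ))
    (ae_norm_sub_condExp_le (.of_forall hWbd))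
    (integrable_residual_mul_residual_sub_sq hA2 hT2 β₀)
end

section
/- (Lemma 1, closed-form solution) Under the stated setup and the conditional-moment restriction, if the heteroscedasticity denominator D := E[R_W·(R_A² − E[R_A² | 𝒢])] is nonzero, then β₀ = E[ R_W·(R_A·R_T − E[R_A·R_T | 𝒢]) ] / D. -/
/-!
Put `S := R_A R_T − β₀ R_A²`. Since `R_T − β₀ R_A` is the ℋ-residual of `V := T − β₀ A`,
`S = R_A V − R_A E[V | ℋ]`, and the second term has zero ℋ-conditional expectation because
`E[R_A | ℋ] = 0`. Hence `E[S | ℋ] = E[R_A V | ℋ]`, which the conditional-moment restriction makes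
𝒢-measurable, so `E[S | ℋ] = E[S | 𝒢]`. As `R_W` is bounded and ℋ-measurable,
`E[R_W (S − E[S | 𝒢])] = E[R_W (E[S | ℋ] − E[S | 𝒢])] = 0`; by linearity the left side is the
numerator minus `β₀ D`.
-/

open MeasureTheory

namespace MeasureTheory

variable {Ω : Type*} {m m₁ m₂ m₀ : MeasurableSpace Ω} {μ : Measure Ω} {f g : Ω → ℝ}

lemma ae_abs_sub_condExp_le {c : ℝ} (hf : ∀ᵐ ω ∂μ, |f ω| ≤ c) :
    ∀ᵐ ω ∂μ, |f ω - μ[f|m] ω| ≤ 2 * c := by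
  filter_upwards [hf, ae_bdd_abs_condExp_of_ae_bdd_abs (m := m) hf] with ω hfω hcω
  linarith [abs_sub (f ω) (μ[f|m] ω)]

lemma condExp_sub_condExp_ae_eq (hm₁₂ : m₁ ≤ m₂) (hm₂ : m₂ ≤ m₀) [SigmaFinite (μ.trim hm₂)]
    (hf : Integrable f μ) : μ[f - μ[f|m₁]|m₂] =ᵐ[μ] μ[f|m₂] - μ[f|m₁] := by
  have hidem : μ[μ[f|m₁]|m₂] = μ[f|m₁] :=
    condExp_of_stronglyMeasurable hm₂ (stronglyMeasurable_condExp.mono hm₁₂) integrable_condExp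
  simpa only [hidem] using condExp_sub hf (integrable_condExp (m := m₁) (f := f)) m₂

lemma condExp_sub_condExp_self (hm : m ≤ m₀) [SigmaFinite (μ.trim hm)] (hf : Integrable f μ) :
    μ[f - μ[f|m]|m] =ᵐ[μ] 0 := by
  filter_upwards [condExp_sub_condExp_ae_eq le_rfl hm hf] with ω hω
  simp [hω]

lemma condExp_sub_condExp_mul_ae_eq_zero (hm : m ≤ m₀) [SigmaFinite (μ.trim hm)]
    (hf : Integrable f μ) (hg : AEStronglyMeasurable[m] g μ)
    (hfg : Integrable ((f - μ[f|m]) * g) μ) : μ[(f - μ[f|m]) * g|m] =ᵐ[μ] 0 := by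
  filter_upwards [condExp_mul_of_aestronglyMeasurable_right hg hfg (hf.sub integrable_condExp),
    condExp_sub_condExp_self hm hf] with ω h h0
  simp [h, h0]

lemma condExp_sub_const_mul (hf : Integrable f μ) (hg : Integrable g μ) (c : ℝ) :
    μ[fun ω => f ω - c * g ω|m] =ᵐ[μ] fun ω => μ[f|m] ω - c * μ[g|m] ω := by
  filter_upwards [condExp_sub hf (hg.const_mul c) m, condExp_smul c g m] with ω hsub hsmul
  have hcg : (fun ω => c * g ω) = c • g := rfl
  rw [← Pi.sub_def, hsub, Pi.sub_apply, hcg, hsmul, Pi.smul_apply, smul_eq_mul]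

lemma condExp_ae_eq_condExp_of_aestronglyMeasurable (hm₁₂ : m₁ ≤ m₂) (hm₂ : m₂ ≤ m₀)
    [SigmaFinite (μ.trim hm₂)] [SigmaFinite (μ.trim (hm₁₂.trans hm₂))]
    (hf : AEStronglyMeasurable[m₁] (μ[f|m₂]) μ) : μ[f|m₁] =ᵐ[μ] μ[f|m₂] :=
  (condExp_condExp_of_le hm₁₂ hm₂).symm.trans
    (condExp_of_aestronglyMeasurable' (hm₁₂.trans hm₂) hf integrable_condExp)

lemma integral_mul_condExp_of_bound [IsFiniteMeasure μ] (hm : m ≤ m₀) {Z : Ω → ℝ} {c : ℝ}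
    (hZ : StronglyMeasurable[m] Z) (hZc : ∀ᵐ ω ∂μ, ‖Z ω‖ ≤ c) (hf : Integrable f μ) :
    ∫ ω, Z ω * μ[f|m] ω ∂μ = ∫ ω, Z ω * f ω ∂μ := by
  rw [← integral_condExp hm (f := fun ω => Z ω * f ω)]
  exact integral_congr_ae (condExp_stronglyMeasurable_mul_of_bound hm hZ hf c hZc).symm

lemma integral_mul_sub_condExp_eq_zero [IsFiniteMeasure μ] (hm₁₂ : m₁ ≤ m₂) (hm₂ : m₂ ≤ m₀)
    {Z : Ω → ℝ} {c : ℝ} (hZ : StronglyMeasurable[m₂] Z) (hZc : ∀ᵐ ω ∂μ, ‖Z ω‖ ≤ c)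
    (hf : Integrable f μ) (hf₁₂ : μ[f|m₂] =ᵐ[μ] μ[f|m₁]) :
    ∫ ω, Z ω * (f ω - μ[f|m₁] ω) ∂μ = 0 := by
  calc ∫ ω, Z ω * (f ω - μ[f|m₁] ω) ∂μ
      = ∫ ω, Z ω * μ[f - μ[f|m₁]|m₂] ω ∂μ :=
        (integral_mul_condExp_of_bound hm₂ hZ hZc (hf.sub integrable_condExp)).symm
    _ = 0 := integral_eq_zero_of_ae <| by
      filter_upwards [condExp_sub_condExp_ae_eq hm₁₂ hm₂ hf, hf₁₂] with ω h h₁₂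
      simp [h, h₁₂]

lemma condExp_mul_sub_condExp_ae_eq [IsFiniteMeasure μ] (hm : m ≤ m₀)
    (hf : MemLp f 2 μ) (hg : MemLp g 2 μ) :
    μ[(f - μ[f|m]) * (g - μ[g|m])|m] =ᵐ[μ] μ[(f - μ[f|m]) * g|m] := by
  have hf' : MemLp (f - μ[f|m]) 2 μ := hf.sub (hf.condExp one_le_two)
  have hproj : Integrable ((f - μ[f|m]) * μ[g|m]) μ := hf'.integrable_mul (hg.condExp one_le_two)
  filter_upwards [condExp_sub (hf'.integrable_mul hg) hproj m,
    condExp_sub_condExp_mul_ae_eq_zero hm (hf.integrable one_le_two)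
      stronglyMeasurable_condExp.aestronglyMeasurable hproj] with ω hsub hzero
  rw [mul_sub, hsub, Pi.sub_apply, hzero, Pi.zero_apply, sub_zero]

lemma integral_mul_sub_condExp_sub_const_mul [IsFiniteMeasure μ] {Z : Ω → ℝ} {c : ℝ}
    (hZ : AEStronglyMeasurable Z μ) (hZc : ∀ᵐ ω ∂μ, ‖Z ω‖ ≤ c)
    (hf : Integrable f μ) (hg : Integrable g μ) (b : ℝ) :
    ∫ ω, Z ω * (f ω - b * g ω - μ[fun ω' => f ω' - b * g ω'|m] ω) ∂μ
      = ∫ ω, Z ω * (f ω - μ[f|m] ω) ∂μ - b * ∫ ω, Z ω * (g ω - μ[g|m] ω) ∂μ := by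
  have hZf : Integrable (fun ω => Z ω * (f ω - μ[f|m] ω)) μ :=
    (hf.sub integrable_condExp).bdd_mul hZ hZc
  have hZg : Integrable (fun ω => Z ω * (g ω - μ[g|m] ω)) μ :=
    (hg.sub integrable_condExp).bdd_mul hZ hZc
  rw [← integral_const_mul, ← integral_sub hZf (hZg.const_mul b)]
  refine integral_congr_ae ?_
  filter_upwards [condExp_sub_const_mul (m := m) hf hg b] with ω h
  simp only [h]
  ring

end MeasureTheory

theorem influence_function_closed_form_general
    {Ω : Type*} {m0 : MeasurableSpace Ω} (P : Measure Ω) [IsProbabilityMeasure P]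
    (𝒢 ℋ : MeasurableSpace Ω) (h𝒢ℋ : 𝒢 ≤ ℋ) (hℋm0 : ℋ ≤ m0)
    (A T W : Ω → ℝ) (hA4 : MemLp A 4 P) (hT4 : MemLp T 4 P)
    (CW : ℝ) (hWbd : ∀ ω, |W ω| ≤ CW) (hWmeas : Measurable[ℋ] W)
    (RW RA RT : Ω → ℝ)
    (hRW : RW = fun ω => W ω - (P[W|𝒢]) ω)
    (hRA : RA = fun ω => A ω - (P[A|ℋ]) ω)
    (hRT : RT = fun ω => T ω - (P[T|ℋ]) ω)
    (β₀ : ℝ)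
    (hCMR : P[fun ω => RA ω * (T ω - β₀ * A ω)|ℋ]
      =ᵐ[P] P[fun ω => RA ω * (T ω - β₀ * A ω)|𝒢])
    (D : ℝ)
    (hDdef : D = ∫ ω, RW ω * (RA ω ^ 2 - (P[fun ω' => RA ω' ^ 2|𝒢]) ω) ∂P)
    (hD : D ≠ 0) :
    β₀ = (∫ ω, RW ω * (RA ω * RT ω - (P[fun ω' => RA ω' * RT ω'|𝒢]) ω) ∂P) / D := by
  have hA2 : MemLp A 2 P := hA4.mono_exponent (by norm_num)
  have hT2 : MemLp T 2 P := hT4.mono_exponent (by norm_num)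
  have hRA2 : MemLp RA 2 P := hRA ▸ hA2.sub (hA2.condExp one_le_two)
  have hRT2 : MemLp RT 2 P := hRT ▸ hT2.sub (hT2.condExp one_le_two)
  have hRWm : StronglyMeasurable[ℋ] RW :=
    hRW ▸ hWmeas.stronglyMeasurable.sub (stronglyMeasurable_condExp.mono h𝒢ℋ)
  have hRWbd : ∀ᵐ ω ∂P, ‖RW ω‖ ≤ 2 * CW := hRW ▸ ae_abs_sub_condExp_le (ae_of_all _ hWbd)
  have hRART : Integrable (fun ω => RA ω * RT ω) P := hRA2.integrable_mul hRT2
  set S : Ω → ℝ := fun ω => RA ω * RT ω - β₀ * RA ω ^ 2 with hSdef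
  have hSℋ : P[S|ℋ] =ᵐ[P] P[fun ω => RA ω * (T ω - β₀ * A ω)|ℋ] := by
    have hV2 : MemLp (fun ω => T ω - β₀ * A ω) 2 P := hT2.sub (hA2.const_mul β₀)
    have hS : S =ᵐ[P]
        (A - P[A|ℋ]) * ((fun ω => T ω - β₀ * A ω) - P[fun ω => T ω - β₀ * A ω|ℋ]) := by
      filter_upwards [condExp_sub_const_mul (m := ℋ) (hT2.integrable one_le_two)
        (hA2.integrable one_le_two) β₀] with ω hV
      simp only [hSdef, Pi.sub_apply, Pi.mul_apply, hV, hRA, hRT]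
      ring
    rw [hRA]
    exact (condExp_congr_ae hS).trans (condExp_mul_sub_condExp_ae_eq hℋm0 hA2 hV2)
  have hS𝒢 : P[S|ℋ] =ᵐ[P] P[S|𝒢] :=
    (condExp_ae_eq_condExp_of_aestronglyMeasurable h𝒢ℋ hℋm0
      (stronglyMeasurable_condExp.aestronglyMeasurable.congr (hSℋ.trans hCMR).symm)).symm
  have horth : ∫ ω, RW ω * (RA ω * RT ω - β₀ * RA ω ^ 2
      - P[fun ω' => RA ω' * RT ω' - β₀ * RA ω' ^ 2|𝒢] ω) ∂P = 0 :=
    integral_mul_sub_condExp_eq_zero (f := S) h𝒢ℋ hℋm0 hRWm hRWbd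
      (hRART.sub (hRA2.integrable_sq.const_mul β₀)) hS𝒢
  rw [integral_mul_sub_condExp_sub_const_mul (hRWm.mono hℋm0).aestronglyMeasurable hRWbd
    hRART hRA2.integrable_sq β₀] at horth
  rw [eq_div_iff hD, hDdef]
  linarith

/-- **Lemma 1 (closed-form solution).** Under the setup and the conditional-moment
restriction, if the heteroscedasticity denominator `D = E[R_W (R_A² − E[R_A² | 𝒢])]`
is nonzero, then `β₀ = E[R_W (R_A R_T − E[R_A R_T | 𝒢])] / D`. -/
theorem influence_function_closed_form
    {Ω : Type*} {m0 : MeasurableSpace Ω} (P : Measure Ω) [IsProbabilityMeasure P]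
    (𝒢 ℋ : MeasurableSpace Ω) (h𝒢ℋ : 𝒢 ≤ ℋ) (hℋm0 : ℋ ≤ m0)
    (A T W : Ω → ℝ) (hA4 : MemLp A 4 P) (hT4 : MemLp T 4 P)
    (CW : ℝ) (hWbd : ∀ ω, |W ω| ≤ CW) (hWmeas : Measurable[ℋ] W)
    (RW RA RT : Ω → ℝ)
    (hRW : RW = fun ω => W ω - (P[W|𝒢]) ω)
    (hRA : RA = fun ω => A ω - (P[A|ℋ]) ω)
    (hRT : RT = fun ω => T ω - (P[T|ℋ]) ω)
    (g : ℝ → Ω → ℝ)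
    (hg : ∀ β, g β = fun ω =>
      RW ω * (RA ω * RT ω - β * RA ω ^ 2
        - (P[fun ω' => RA ω' * RT ω' - β * RA ω' ^ 2|𝒢]) ω))
    (β₀ : ℝ)
    (hCMR : P[fun ω => RA ω * (T ω - β₀ * A ω)|ℋ]
      =ᵐ[P] P[fun ω => RA ω * (T ω - β₀ * A ω)|𝒢])
    (D : ℝ)
    (hDdef : D = ∫ ω, RW ω * (RA ω ^ 2 - (P[fun ω' => RA ω' ^ 2|𝒢]) ω) ∂P)
    (hD : D ≠ 0) :
    β₀ = (∫ ω, RW ω * (RA ω * RT ω - (P[fun ω' => RA ω' * RT ω'|𝒢]) ω) ∂P) / D :=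
  influence_function_closed_form_general P 𝒢 ℋ h𝒢ℋ hℋm0 A T W hA4 hT4 CW hWbd hWmeas RW RA RT hRW
    hRA hRT β₀ hCMR D hDdef hD
end

section
/- (Complete-data reduction of the AIPCW moment) Under the stated setup and censoring assumptions, for every β ∈ ℝ the AIPCW moment has the same mean as the complete-data moment: E[ψ(β)] = E[g(β)]. -/
open MeasureTheory

lemma memℒp_two_condexp_aux {Ω : Type*} {m m0 : MeasurableSpace Ω} (hm : m ≤ m0)
    {μ : Measure Ω} [IsFiniteMeasure μ] {f : Ω → ℝ} (hf : MemLp f 2 μ) :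
    MemLp (μ[f|m]) 2 μ := by
  have hfi : Integrable f μ := hf.integrable (by norm_num)
  set fL : Lp ℝ 2 μ := hf.toLp f with hfL
  set cL : Lp ℝ 2 μ := ((condExpL2 ℝ ℝ hm fL : lpMeas ℝ ℝ m 2 μ) : Lp ℝ 2 μ) with hcL
  have hL : (cL : Ω → ℝ) =ᵐ[μ] μ[f|m] := by
    refine ae_eq_condExp_of_forall_setIntegral_eq hm hfi ?_ ?_ ?_
    · intro s _ hμs
      exact integrableOn_Lp_of_measure_ne_top cL (by norm_num) hμs.ne
    · intro s hs hμs
      rw [show ∫ x in s, (cL : Ω → ℝ) x ∂μ = ∫ x in s, fL x ∂μ from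
        integral_condExpL2_eq hm fL hs hμs.ne]
      exact setIntegral_congr_ae (hm s hs) ((hf.coeFn_toLp).mono fun x hx _ => hx)
    · exact lpMeas.aestronglyMeasurable _
  exact (Lp.memLp cL).ae_eq hL

lemma mul_int_of_memℒp_two {Ω : Type*} {m0 : MeasurableSpace Ω} {μ : Measure Ω}
    {f g : Ω → ℝ} (hf : MemLp f 2 μ) (hg : MemLp g 2 μ) :
    Integrable (fun ω => f ω * g ω) μ := by
  have := hg.smul hf (p := 2) (q := 2) (r := 1) (hpqr := ⟨by rw [inv_one]; exact ENNReal.inv_two_add_inv_two⟩)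
  rw [memLp_one_iff_integrable] at this
  exact this.congr (Filter.Eventually.of_forall fun ω => by simp [smul_eq_mul])

/-- **Complete-data reduction of the AIPCW moment.** Under the setup and the censoring
assumptions, for every `β` the AIPCW moment has the same mean as the complete-data moment:
`E[ψ(β)] = E[g(β)]`. -/
theorem aipcw_complete_data_reduction
    {Ω : Type*} (𝒢 ℋ 𝒜 ℋ' : MeasurableSpace Ω) {m0 : MeasurableSpace Ω} (P : Measure Ω) [IsProbabilityMeasure P]
    (h𝒢ℋ : 𝒢 ≤ ℋ) (hℋ𝒜 : ℋ ≤ 𝒜) (h𝒜ℋ' : 𝒜 ≤ ℋ') (hℋ'm0 : ℋ' ≤ m0)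
    (A T W : Ω → ℝ) (hA4 : MemLp A 4 P) (hT4 : MemLp T 4 P)
    (CW : ℝ) (hWbd : ∀ ω, |W ω| ≤ CW) (hWmeas : Measurable[ℋ] W)
    (hAmeas : Measurable[𝒜] A) (hTmeas : Measurable[ℋ'] T)
    (δ G : Ω → ℝ) (hδmeas : Measurable δ) (hδ01 : ∀ ω, δ ω = 0 ∨ δ ω = 1)
    (hGmeas : Measurable[ℋ'] G)
    (ε : ℝ) (hε : 0 < ε) (hGbd : ∀ᵐ ω ∂P, ε ≤ G ω ∧ G ω ≤ 1)
    (hδG : P[δ|ℋ'] =ᵐ[P] G)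
    (RW RA RT : Ω → ℝ)
    (hRW : RW = fun ω => W ω - (P[W|𝒢]) ω)
    (hRA : RA = fun ω => A ω - (P[A|ℋ]) ω)
    (hRT : RT = fun ω => T ω - (P[T|ℋ]) ω)
    (g ξ ψ : ℝ → Ω → ℝ)
    (hg : ∀ β, g β = fun ω =>
      RW ω * (RA ω * RT ω - β * RA ω ^ 2
        - (P[fun ω' => RA ω' * RT ω' - β * RA ω' ^ 2|𝒢]) ω))
    (hξ : ∀ β, ξ β = P[g β|𝒜])
    (hψ : ∀ β, ψ β = fun ω => (δ ω / G ω) * (g β ω - ξ β ω) + ξ β ω) :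
    ∀ β : ℝ, ∫ ω, ψ β ω ∂P = ∫ ω, g β ω ∂P := by
  intro β
  have hℋℋ' : ℋ ≤ ℋ' := hℋ𝒜.trans h𝒜ℋ'
  have h𝒢ℋ' : 𝒢 ≤ ℋ' := h𝒢ℋ.trans hℋℋ'
  have h𝒜m0 : 𝒜 ≤ m0 := h𝒜ℋ'.trans hℋ'm0
  have hℋm0 : ℋ ≤ m0 := hℋ𝒜.trans h𝒜m0
  have h𝒢m0 : 𝒢 ≤ m0 := h𝒢ℋ.trans hℋm0
  -- L² facts
  have hA2 : MemLp A 2 P := hA4.mono_exponent (by norm_num)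
  have hT2 : MemLp T 2 P := hT4.mono_exponent (by norm_num)
  have hRA2 : MemLp RA 2 P := by
    rw [hRA]; exact hA2.sub (memℒp_two_condexp_aux hℋm0 hA2)
  have hRT2 : MemLp RT 2 P := by
    rw [hRT]; exact hT2.sub (memℒp_two_condexp_aux hℋm0 hT2)
  -- the inner function and its integrability
  set q : Ω → ℝ := fun ω => RA ω * RT ω - β * RA ω ^ 2 with hq
  have hq_int : Integrable q P := by
    have h1 : Integrable (fun ω => RA ω * RT ω) P := mul_int_of_memℒp_two hRA2 hRT2
    have h2 : Integrable (fun ω => RA ω * RA ω) P := mul_int_of_memℒp_two hRA2 hRA2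
    have h2' : Integrable (fun ω => β * RA ω ^ 2) P := by
      simpa [pow_two] using (h2.const_mul β)
    exact h1.sub h2'
  set r : Ω → ℝ := fun ω => q ω - (P[q|𝒢]) ω with hr
  have hr_int : Integrable r P := hq_int.sub integrable_condExp
  -- boundedness of RW
  have hWbd' : ∀ᵐ ω ∂P, |W ω| ≤ (CW.toNNReal : ℝ) :=
    Filter.Eventually.of_forall fun ω => (hWbd ω).trans (Real.le_coe_toNNReal CW)
  have hcWbd : ∀ᵐ ω ∂P, |(P[W|𝒢]) ω| ≤ (CW.toNNReal : ℝ) :=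
    ae_bdd_condExp_of_ae_bdd hWbd'
  have hRWbd : ∀ᵐ ω ∂P, ‖RW ω‖ ≤ 2 * (CW.toNNReal : ℝ) := by
    filter_upwards [hWbd', hcWbd] with ω h1 h2
    rw [hRW]
    calc |W ω - (P[W|𝒢]) ω| ≤ |W ω| + |(P[W|𝒢]) ω| := abs_sub _ _
    _ ≤ 2 * (CW.toNNReal : ℝ) := by linarith
  -- measurability facts
  have hRWm : Measurable[ℋ'] RW := by
    rw [hRW]
    exact (hWmeas.mono hℋℋ' le_rfl).sub
      ((stronglyMeasurable_condExp.measurable).mono h𝒢ℋ' le_rfl)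
  have hRAm : Measurable[ℋ'] RA := by
    rw [hRA]
    exact (hAmeas.mono h𝒜ℋ' le_rfl).sub
      ((stronglyMeasurable_condExp.measurable).mono hℋℋ' le_rfl)
  have hRTm : Measurable[ℋ'] RT := by
    rw [hRT]
    exact hTmeas.sub ((stronglyMeasurable_condExp.measurable).mono hℋℋ' le_rfl)
  have hgm : Measurable[ℋ'] (g β) := by
    rw [hg]
    exact hRWm.mul (((hRAm.mul hRTm).sub ((hRAm.pow_const 2).const_mul β)).sub
      ((stronglyMeasurable_condExp.measurable).mono h𝒢ℋ' le_rfl))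
  have hξm : Measurable[ℋ'] (ξ β) := by
    rw [hξ]
    exact (stronglyMeasurable_condExp.measurable).mono h𝒜ℋ' le_rfl
  -- integrability of g β and ξ β
  have hg_int : Integrable (g β) P := by
    rw [hg]
    exact hr_int.bdd_mul ((hRWm.mono hℋ'm0 le_rfl).aestronglyMeasurable) hRWbd
  have hξ_int : Integrable (ξ β) P := by rw [hξ]; exact integrable_condExp
  -- the function h = (g - ξ)/G
  set h : Ω → ℝ := fun ω => (g β ω - ξ β ω) / G ω with hh
  have hhm : Measurable[ℋ'] h := (hgm.sub hξm).div hGmeas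
  have hh_int : Integrable h P := by
    refine Integrable.mono' (((hg_int.sub hξ_int).abs).const_mul ε⁻¹)
      ((hhm.mono hℋ'm0 le_rfl).aestronglyMeasurable) ?_
    filter_upwards [hGbd] with ω ⟨h1, h2⟩
    have hG0 : 0 < G ω := lt_of_lt_of_le hε h1
    rw [hh]
    simp only [Real.norm_eq_abs, abs_div, abs_of_pos hG0]
    rw [div_le_iff₀ hG0]
    calc |g β ω - ξ β ω| = ε⁻¹ * |g β ω - ξ β ω| * ε := by
          field_simp
    _ ≤ ε⁻¹ * |g β ω - ξ β ω| * G ω := by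
          have : 0 ≤ ε⁻¹ * |g β ω - ξ β ω| := by positivity
          exact mul_le_mul_of_nonneg_left h1 this
  have hδ_int : Integrable δ P := by
    refine Integrable.mono' (integrable_const 1) (Measurable.aestronglyMeasurable (μ := P) hδmeas) ?_
    refine Filter.Eventually.of_forall fun ω => ?_
    rcases hδ01 ω with h0 | h0 <;> simp [h0]
  have hhδ_int : Integrable (h * δ) P := by
    have : Integrable (fun ω => δ ω * h ω) P := by
      refine hh_int.bdd_mul (Measurable.aestronglyMeasurable (μ := P) hδmeas)
        (c := 1) (Filter.Eventually.of_forall fun ω => ?_)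
      rcases hδ01 ω with h0 | h0 <;> simp [h0]
    exact this.congr (Filter.Eventually.of_forall fun ω => mul_comm _ _)
  -- pull-out property
  have hpull : P[h * δ|ℋ'] =ᵐ[P] h * P[δ|ℋ'] :=
    condExp_mul_of_stronglyMeasurable_left (hhm.stronglyMeasurable) hhδ_int hδ_int
  -- key: ∫ h·δ = ∫ (g - ξ)
  have key : ∫ ω, h ω * δ ω ∂P = ∫ ω, (g β ω - ξ β ω) ∂P := by
    have e1 : ∫ ω, h ω * δ ω ∂P = ∫ ω, (P[h * δ|ℋ']) ω ∂P :=
      (integral_condExp hℋ'm0).symm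
    rw [e1, integral_congr_ae hpull]
    refine integral_congr_ae ?_
    filter_upwards [hδG, hGbd] with ω hδGω ⟨h1, _⟩
    have hG0 : G ω ≠ 0 := (lt_of_lt_of_le hε h1).ne'
    simp only [Pi.mul_apply, hδGω, hh]
    field_simp
  -- conclude
  have hint1 : ∫ ω, ξ β ω ∂P = ∫ ω, g β ω ∂P := by
    rw [hξ]; exact integral_condExp h𝒜m0
  have hψ_eq : ψ β = fun ω => h ω * δ ω + ξ β ω := by
    rw [hψ]
    funext ω
    rw [hh]
    by_cases hGz : G ω = 0
    · simp [hGz]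
    · field_simp
  have hhδ_int' : Integrable (fun ω => h ω * δ ω) P := hhδ_int
  calc ∫ ω, ψ β ω ∂P = ∫ ω, (h ω * δ ω + ξ β ω) ∂P := by rw [hψ_eq]
    _ = (∫ ω, h ω * δ ω ∂P) + ∫ ω, ξ β ω ∂P := integral_add hhδ_int' hξ_int
    _ = ∫ ω, g β ω ∂P := by rw [key, integral_sub hg_int hξ_int, hint1]; ring
end

section
/- (Affine identity for the censored AIPCW moment) Under the stated setup and censoring assumptions (no conditional-moment restriction needed), for all β, β′ ∈ ℝ one has E[ψ(β)] − E[ψ(β′)] = (β′ − β)·E[ R_W·(R_A² − E[R_A² | 𝒢]) ]; in particular the map β ↦ E[ψ(β)] is affine in β with the same slope as the uncensored moment. -/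
open MeasureTheory
open scoped ENNReal NNReal

lemma memℒp_two_condexp {α : Type*} {m m0 : MeasurableSpace α} {μ : Measure α}
    [IsFiniteMeasure μ] (hm : m ≤ m0) {f : α → ℝ} (hf : MemLp f 2 μ) :
    MemLp (μ[f|m]) 2 μ := by
  haveI : SigmaFinite (μ.trim hm) := inferInstance
  set fL : Lp ℝ 2 μ := hf.toLp f with hfL
  have hae : ((condExpL2 ℝ ℝ hm fL : Lp ℝ 2 μ) : α → ℝ) =ᵐ[μ] μ[f|m] := by
    refine ae_eq_condExp_of_forall_setIntegral_eq hm (hf.integrable (by norm_num)) ?_ ?_ ?_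
    · intro s _ _
      exact ((Lp.memLp _).integrable (by norm_num)).integrableOn
    · intro s hs hμs
      rw [integral_condExpL2_eq hm fL hs hμs.ne]
      exact setIntegral_congr_ae (hm s hs) ((hf.coeFn_toLp).mono fun x hx _ => hx)
    · exact aestronglyMeasurable_condExpL2 hm fL
  exact (Lp.memLp _).ae_eq hae

/-- **Affine identity for the censored AIPCW moment.** Under the setup and the censoring
assumptions, for all `β, β'`,
`E[ψ(β)] − E[ψ(β')] = (β' − β)·E[R_W (R_A² − E[R_A² | 𝒢])]`; in particular `β ↦ E[ψ(β)]`
is affine with slope `−E[R_W (R_A² − E[R_A² | 𝒢])]`. -/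
theorem aipcw_affine
    {Ω : Type*} (𝒢 ℋ 𝒜 ℋ' : MeasurableSpace Ω) {m0 : MeasurableSpace Ω} (P : Measure Ω) [IsProbabilityMeasure P]
    (h𝒢ℋ : 𝒢 ≤ ℋ) (hℋ𝒜 : ℋ ≤ 𝒜) (h𝒜ℋ' : 𝒜 ≤ ℋ') (hℋ'm0 : ℋ' ≤ m0)
    (A T W : Ω → ℝ) (hA4 : MemLp A 4 P) (hT4 : MemLp T 4 P)
    (CW : ℝ) (hWbd : ∀ ω, |W ω| ≤ CW) (hWmeas : Measurable[ℋ] W)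
    (hAmeas : Measurable[𝒜] A) (hTmeas : Measurable[ℋ'] T)
    (δ G : Ω → ℝ) (hδmeas : Measurable δ) (hδ01 : ∀ ω, δ ω = 0 ∨ δ ω = 1)
    (hGmeas : Measurable[ℋ'] G)
    (ε : ℝ) (hε : 0 < ε) (hGbd : ∀ᵐ ω ∂P, ε ≤ G ω ∧ G ω ≤ 1)
    (hδG : P[δ|ℋ'] =ᵐ[P] G)
    (RW RA RT : Ω → ℝ)
    (hRW : RW = fun ω => W ω - (P[W|𝒢]) ω)
    (hRA : RA = fun ω => A ω - (P[A|ℋ]) ω)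
    (hRT : RT = fun ω => T ω - (P[T|ℋ]) ω)
    (g ξ ψ : ℝ → Ω → ℝ)
    (hg : ∀ β, g β = fun ω =>
      RW ω * (RA ω * RT ω - β * RA ω ^ 2
        - (P[fun ω' => RA ω' * RT ω' - β * RA ω' ^ 2|𝒢]) ω))
    (hξ : ∀ β, ξ β = P[g β|𝒜])
    (hψ : ∀ β, ψ β = fun ω => (δ ω / G ω) * (g β ω - ξ β ω) + ξ β ω) :
    ∀ β β' : ℝ,
      (∫ ω, ψ β ω ∂P) - (∫ ω, ψ β' ω ∂P)
        = (β' - β) * ∫ ω, RW ω * (RA ω ^ 2 - (P[fun ω' => RA ω' ^ 2|𝒢]) ω) ∂P := by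
  intro β β'
  have h𝒜m0 : 𝒜 ≤ m0 := h𝒜ℋ'.trans hℋ'm0
  have hℋm0 : ℋ ≤ m0 := hℋ𝒜.trans h𝒜m0
  have h𝒢m0 : 𝒢 ≤ m0 := h𝒢ℋ.trans hℋm0
  haveI : SigmaFinite (P.trim h𝒢m0) := inferInstance
  haveI : SigmaFinite (P.trim hℋm0) := inferInstance
  haveI : SigmaFinite (P.trim h𝒜m0) := inferInstance
  haveI : SigmaFinite (P.trim hℋ'm0) := inferInstance
  -- moment facts
  have hA2 : MemLp A 2 P := hA4.mono_exponent (by norm_num)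
  have hT2 : MemLp T 2 P := hT4.mono_exponent (by norm_num)
  have hRA2 : MemLp RA 2 P := by
    rw [hRA]; exact hA2.sub (memℒp_two_condexp hℋm0 hA2)
  have hRT2 : MemLp RT 2 P := by
    rw [hRT]; exact hT2.sub (memℒp_two_condexp hℋm0 hT2)
  have hRART : Integrable (fun ω => RA ω * RT ω) P := by
    have h12 : (1 : ℝ≥0∞) / 1 = 1 / 2 + 1 / 2 := by
      rw [div_one, ENNReal.add_halves]
    exact memLp_one_iff_integrable.mp (hRT2.smul hRA2)
  have hRAsq : Integrable (fun ω => RA ω ^ 2) P := hRA2.integrable_sq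
  -- a.e. bound on RW
  have hWbd' : ∀ᵐ ω ∂P, |W ω| ≤ (CW.toNNReal : ℝ) :=
    Filter.Eventually.of_forall fun ω => (hWbd ω).trans (Real.le_coe_toNNReal CW)
  have hcondWbd : ∀ᵐ ω ∂P, |(P[W|𝒢]) ω| ≤ (CW.toNNReal : ℝ) := ae_bdd_condExp_of_ae_bdd hWbd'
  have hRWbd : ∀ᵐ ω ∂P, ‖RW ω‖ ≤ (CW.toNNReal : ℝ) + (CW.toNNReal : ℝ) := by
    filter_upwards [hWbd', hcondWbd] with ω h1 h2
    rw [hRW, Real.norm_eq_abs]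
    exact (abs_sub _ _).trans (add_le_add h1 h2)
  -- measurability
  have hRWm : Measurable[𝒜] RW := by
    rw [hRW]
    exact (hWmeas.mono hℋ𝒜 le_rfl).sub
      ((stronglyMeasurable_condExp.mono (h𝒢ℋ.trans hℋ𝒜)).measurable)
  have hRAm : Measurable[𝒜] RA := by
    rw [hRA]
    exact hAmeas.sub ((stronglyMeasurable_condExp.mono hℋ𝒜).measurable)
  -- key function φ
  set φ : Ω → ℝ := fun ω => RW ω * (RA ω ^ 2 - (P[fun ω' => RA ω' ^ 2|𝒢]) ω) with hφdef
  have hφm : Measurable[𝒜] φ :=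
    hRWm.mul ((hRAm.pow_const 2).sub
      ((stronglyMeasurable_condExp.mono (h𝒢ℋ.trans hℋ𝒜)).measurable))
  have hφInt : Integrable φ P :=
    (hRAsq.sub integrable_condExp).bdd_mul
      ((hRWm.mono h𝒜m0 le_rfl).aestronglyMeasurable) hRWbd
  have hφA : P[φ|𝒜] = φ := condExp_of_stronglyMeasurable h𝒜m0 hφm.stronglyMeasurable hφInt
  -- integrability of g
  have hF : ∀ b : ℝ, Integrable (fun ω => RA ω * RT ω - b * RA ω ^ 2) P :=
    fun b => hRART.sub (hRAsq.const_mul b)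
  have hgInt : ∀ b : ℝ, Integrable (g b) P := by
    intro b
    rw [hg b]
    exact ((hF b).sub integrable_condExp).bdd_mul
      ((hRWm.mono h𝒜m0 le_rfl).aestronglyMeasurable) hRWbd
  -- Δg a.e.
  have hce : (P[fun ω => RA ω * RT ω - β * RA ω ^ 2|𝒢])
      - (P[fun ω => RA ω * RT ω - β' * RA ω ^ 2|𝒢])
      =ᵐ[P] (β' - β) • (P[fun ω' => RA ω' ^ 2|𝒢]) := by
    have h1 : (fun ω => RA ω * RT ω - β * RA ω ^ 2)
        - (fun ω => RA ω * RT ω - β' * RA ω ^ 2)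
        = (β' - β) • (fun ω' => RA ω' ^ 2) := by
      funext ω; simp only [Pi.sub_apply, Pi.smul_apply, smul_eq_mul]; ring
    calc (P[fun ω => RA ω * RT ω - β * RA ω ^ 2|𝒢])
          - (P[fun ω => RA ω * RT ω - β' * RA ω ^ 2|𝒢])
        =ᵐ[P] P[(fun ω => RA ω * RT ω - β * RA ω ^ 2)
            - (fun ω => RA ω * RT ω - β' * RA ω ^ 2)|𝒢] := (condExp_sub (hF β) (hF β') 𝒢).symm
      _ = P[(β' - β) • (fun ω' => RA ω' ^ 2)|𝒢] := by rw [h1]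
      _ =ᵐ[P] (β' - β) • (P[fun ω' => RA ω' ^ 2|𝒢]) := condExp_smul _ _ 𝒢
  have hΔg : (fun ω => g β ω - g β' ω) =ᵐ[P] (β' - β) • φ := by
    filter_upwards [hce] with ω hω
    simp only [Pi.sub_apply, Pi.smul_apply, smul_eq_mul] at hω ⊢
    rw [hg β, hg β']
    simp only [hφdef]
    linear_combination (-(RW ω)) * hω
  -- Δξ a.e.
  have hΔξ : (fun ω => ξ β ω - ξ β' ω) =ᵐ[P] (β' - β) • φ := by
    have h0 : (fun ω => ξ β ω - ξ β' ω) = P[g β|𝒜] - P[g β'|𝒜] := by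
      rw [hξ β, hξ β']; rfl
    rw [h0]
    calc P[g β|𝒜] - P[g β'|𝒜]
        =ᵐ[P] P[g β - g β'|𝒜] := (condExp_sub (hgInt β) (hgInt β') 𝒜).symm
      _ =ᵐ[P] P[(β' - β) • φ|𝒜] := condExp_congr_ae hΔg
      _ =ᵐ[P] (β' - β) • (P[φ|𝒜]) := condExp_smul _ _ 𝒜
      _ = (β' - β) • φ := by rw [hφA]
  -- integrability of ψ
  have hψInt : ∀ b : ℝ, Integrable (ψ b) P := by
    intro b
    rw [hψ b, hξ b]
    have hGm0 : Measurable[m0] G := hGmeas.mono hℋ'm0 le_rfl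
    have hδm0 : Measurable[m0] δ := hδmeas
    have hd : AEStronglyMeasurable[m0] (fun ω => δ ω / G ω) P :=
      (hδm0.div hGm0).aestronglyMeasurable
    have hbd : ∀ᵐ ω ∂P, ‖δ ω / G ω‖ ≤ 1 / ε := by
      filter_upwards [hGbd] with ω hω
      obtain ⟨h1, _⟩ := hω
      have hGpos : 0 < G ω := lt_of_lt_of_le hε h1
      rw [Real.norm_eq_abs, abs_div, abs_of_pos hGpos]
      have hδle : |δ ω| ≤ 1 := by rcases hδ01 ω with h | h <;> simp [h]
      exact div_le_div₀ (by norm_num) hδle hε h1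
    exact (((hgInt b).sub integrable_condExp).bdd_mul hd hbd).add integrable_condExp
  -- a.e. identity for the difference
  have hΔψ : (fun ω => ψ β ω - ψ β' ω) =ᵐ[P] fun ω => (β' - β) * φ ω := by
    filter_upwards [hΔg, hΔξ] with ω h1 h2
    simp only [Pi.smul_apply, smul_eq_mul] at h1 h2
    rw [hψ β, hψ β']
    simp only
    linear_combination (δ ω / G ω) * h1 - (δ ω / G ω) * h2 + h2
  -- conclude
  rw [← integral_sub (hψInt β) (hψInt β'), integral_congr_ae hΔψ, integral_const_mul]
end

section
/- (Heteroscedasticity representation of the identification denominator) Under the stated setup, the identification denominator equals the covariance of W with the conditional variance of A given ℋ: E[ R_W·(R_A² − E[R_A² | 𝒢]) ] = E[ R_W·( E[A² | ℋ] − (E[A | ℋ])² ) ]. In the paper's notation this says the denominator equals Cov(h(Z), Var(A | Z, X) | X)-type quantity, so identification requires that the conditional variance of A vary with the instruments, which is Assumption 2(iii). -/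
open MeasureTheory ProbabilityTheory

/-!
Write `R_W = W - E[W | 𝒢]` and `R_A = A - E[A | ℋ]`. Since `R_W` is orthogonal to every
`𝒢`-measurable integrable function, the term `E[R_A² | 𝒢]` contributes nothing. Since `R_W` is
`ℋ`-measurable and bounded, `R_A²` may be replaced by `E[R_A² | ℋ] = Var[A | ℋ]`, and the
conditional variance equals `E[A² | ℋ] - E[A | ℋ]²`.
-/

section Residual

variable {Ω : Type*} {m m' m₀ : MeasurableSpace Ω} {μ : Measure Ω} {f g : Ω → ℝ}

theorem integral_mul_condExp_of_stronglyMeasurable_left (hm : m ≤ m₀)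
    [SigmaFinite (μ.trim hm)] (hf : StronglyMeasurable[m] f) (hfg : Integrable (f * g) μ)
    (hg : Integrable g μ) :
    ∫ ω, f ω * (μ[g | m]) ω ∂μ = ∫ ω, f ω * g ω ∂μ := by
  calc ∫ ω, f ω * (μ[g | m]) ω ∂μ = ∫ ω, (μ[f * g | m]) ω ∂μ :=
        integral_congr_ae (condExp_mul_of_stronglyMeasurable_left hf hfg hg).symm
    _ = ∫ ω, f ω * g ω ∂μ := integral_condExp hm

theorem integral_sub_condExp_mul_eq_zero (hm : m ≤ m₀) [SigmaFinite (μ.trim hm)]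
    (hg : StronglyMeasurable[m] g) (hgf : Integrable (g * f) μ) (hf : Integrable f μ) :
    ∫ ω, (f ω - (μ[f | m]) ω) * g ω ∂μ = 0 := by
  have hg_condExp : Integrable (g * μ[f | m]) μ :=
    integrable_condExp.congr (condExp_mul_of_stronglyMeasurable_left hg hgf hf)
  calc ∫ ω, (f ω - (μ[f | m]) ω) * g ω ∂μ = ∫ ω, (g * f - g * μ[f | m]) ω ∂μ := by
          congr with ω
          simp only [Pi.sub_apply, Pi.mul_apply]
          ring
    _ = ∫ ω, g ω * f ω ∂μ - ∫ ω, g ω * (μ[f | m]) ω ∂μ := integral_sub hgf hg_condExp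
    _ = 0 := by rw [integral_mul_condExp_of_stronglyMeasurable_left hm hg hgf hf, sub_self]

theorem integral_sub_condExp_mul_sub_condExp [IsFiniteMeasure μ] (hm : m ≤ m') (hm' : m' ≤ m₀)
    (hf : MemLp f ⊤ μ) (hf_meas : StronglyMeasurable[m'] f) (hg : Integrable g μ) :
    ∫ ω, (f ω - (μ[f | m]) ω) * (g ω - (μ[g | m]) ω) ∂μ
      = ∫ ω, (f ω - (μ[f | m]) ω) * (μ[g | m']) ω ∂μ := by
  set r : Ω → ℝ := f - μ[f | m]
  have hr : MemLp r ⊤ μ := hf.sub (hf.condExp le_top)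
  have hr_meas : StronglyMeasurable[m'] r := hf_meas.sub (stronglyMeasurable_condExp.mono hm)
  have hr_orth : ∫ ω, (r * μ[g | m]) ω ∂μ = 0 :=
    integral_sub_condExp_mul_eq_zero (hm.trans hm') stronglyMeasurable_condExp
      (integrable_condExp.mul_of_top_left hf) (hf.integrable le_top)
  calc ∫ ω, (f ω - (μ[f | m]) ω) * (g ω - (μ[g | m]) ω) ∂μ
        = ∫ ω, (r * g - r * μ[g | m]) ω ∂μ := by
          congr with ω
          exact mul_sub _ _ _
    _ = ∫ ω, (r * g) ω ∂μ - ∫ ω, (r * μ[g | m]) ω ∂μ :=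
          integral_sub (hg.mul_of_top_right hr) (integrable_condExp.mul_of_top_right hr)
    _ = ∫ ω, r ω * g ω ∂μ := by rw [hr_orth, sub_zero]; rfl
    _ = ∫ ω, r ω * (μ[g | m']) ω ∂μ :=
          (integral_mul_condExp_of_stronglyMeasurable_left hm' hr_meas
            (hg.mul_of_top_right hr) hg).symm

end Residual

/-- **Heteroscedasticity representation of the identification denominator.** The
identification denominator equals the covariance of `W` with the conditional variance
of `A` given `ℋ`:
`E[R_W (R_A² − E[R_A² | 𝒢])] = E[R_W (E[A² | ℋ] − (E[A | ℋ])²)]`. -/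
theorem denominator_heteroscedasticity
    {Ω : Type*} {m0 : MeasurableSpace Ω} (P : Measure Ω) [IsProbabilityMeasure P]
    (𝒢 ℋ : MeasurableSpace Ω) (h𝒢ℋ : 𝒢 ≤ ℋ) (hℋm0 : ℋ ≤ m0)
    (A W : Ω → ℝ) (hA4 : MemLp A 4 P)
    (CW : ℝ) (hWbd : ∀ ω, |W ω| ≤ CW) (hWmeas : Measurable[ℋ] W)
    (RW RA : Ω → ℝ)
    (hRW : RW = fun ω => W ω - (P[W|𝒢]) ω)
    (hRA : RA = fun ω => A ω - (P[A|ℋ]) ω) :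
    ∫ ω, RW ω * (RA ω ^ 2 - (P[fun ω' => RA ω' ^ 2|𝒢]) ω) ∂P
      = ∫ ω, RW ω * ((P[fun ω' => A ω' ^ 2|ℋ]) ω - ((P[A|ℋ]) ω) ^ 2) ∂P := by
  have hA2 : MemLp A 2 P := hA4.mono_exponent (by norm_num)
  have hRA2 : Integrable (RA ^ 2) P :=
    hRA ▸ (hA2.sub (hA2.condExp one_le_two)).integrable_sq
  have hW : MemLp W ⊤ P :=
    memLp_top_of_bound (hWmeas.mono hℋm0 le_rfl).aestronglyMeasurable CW (ae_of_all _ hWbd)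
  have hvar : P[RA ^ 2 | ℋ] =ᵐ[P] P[A ^ 2 | ℋ] - P[A | ℋ] ^ 2 :=
    hRA ▸ condVar_ae_eq_condExp_sq_sub_sq_condExp hℋm0 hA2
  calc ∫ ω, RW ω * (RA ω ^ 2 - (P[fun ω' => RA ω' ^ 2|𝒢]) ω) ∂P
        = ∫ ω, RW ω * (P[RA ^ 2 | ℋ]) ω ∂P := by
          subst hRW
          exact integral_sub_condExp_mul_sub_condExp h𝒢ℋ hℋm0 hW hWmeas.stronglyMeasurable hRA2
    _ = _ := integral_congr_ae (hvar.mono fun ω hω => by simp only [hω]; rfl)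
end
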